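/- Let A_𝔈, B_𝔈 be the (n−1)×n matrices attached to a collection of n−1 quadruples (i_s, j_s, k_s, l_s): A_𝔈 has row s with entry 1 in column i_s, −1 in column j_s, 0 elsewhere; B_𝔈 has row s with entry 1 in column k_s, −1 in column l_s, 0 elsewhere. For k ∈ {1,…,n}, let A_k, B_k be the (n−1)×(n−1) submatrices obtained by deleting column k from A_𝔈 and B_𝔈. Then sdet(A_k, B_k) is independent of k: sdet(A_1, B_1) = sdet(A_2, B_2) = ⋯ = sdet(A_n, B_n). -/

import Mathlib

/-- The `I`-shuffle of `A` and `B`: the matrix whose `i`-th row is the `i`-th row of `A`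
if `i ∈ I` and the `i`-th row of `B` otherwise. -/
def shuffleMatrix {m : ℕ} {R : Type*} (A B : Matrix (Fin m) (Fin m) R)
    (I : Finset (Fin m)) : Matrix (Fin m) (Fin m) R :=
  fun i j => if i ∈ I then A i j else B i j

/-- The shuffle determinant `sdet(A,B) = Σ_I det((A,B)_I) det((A,B)_{Ī})`. -/
def sdet {m : ℕ} {R : Type*} [CommRing R] (A B : Matrix (Fin m) (Fin m) R) : R :=
  ∑ I : Finset (Fin m), (shuffleMatrix A B I).det * (shuffleMatrix A B Iᶜ).det

/-- The `(n−1) × n` matrix (here `n = m + 1`) whose row `s` has entry `1` in column `i s`,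
`−1` in column `j s` and `0` elsewhere. -/
def quadMatrix {m : ℕ} {R : Type*} [CommRing R] (i j : Fin m → Fin (m + 1)) :
    Matrix (Fin m) (Fin (m + 1)) R :=
  fun s t => if t = i s then 1 else if t = j s then -1 else 0


open Matrix

section DeleteColumn

variable {m : ℕ} {R : Type*} [CommRing R]

/-- Expanding along an extra first row `e_c - e_{c'}` gives the alternating difference of the
two maximal minors; that square matrix still has zero row sums, so it is singular. -/
theorem neg_one_pow_mul_det_submatrix_succAbove_eq {M : Matrix (Fin m) (Fin (m + 1)) R}
    (hM : ∀ s, ∑ t, M s t = 0) (c c' : Fin (m + 1)) :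
    (-1) ^ (c : ℕ) * (M.submatrix id c.succAbove).det =
      (-1) ^ (c' : ℕ) * (M.submatrix id c'.succAbove).det := by
  let N : Matrix (Fin (m + 1)) (Fin (m + 1)) R := of (vecCons (Pi.single c 1 - Pi.single c' 1) M)
  have hN : N *ᵥ 1 = 0 := by
    ext s
    simp only [mulVec, dotProduct, Pi.one_apply, mul_one, Pi.zero_apply]
    refine Fin.cases ?_ (fun s => ?_) s
    · simp [N]
    · exact hM s
  have hdet : N.det = 0 :=
    det_eq_zero_of_mulVec_eq_zero_of_mem_nonZeroDivisors hN (i := 0) (one_mem _)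
  have hminor : ∀ t : Fin (m + 1),
      N.submatrix Fin.succ t.succAbove = M.submatrix id t.succAbove := fun _ => rfl
  have hrow0 : N 0 = Pi.single c 1 - Pi.single c' 1 := rfl
  rw [det_succ_row_zero] at hdet
  simp only [hminor, hrow0, Pi.sub_apply, mul_sub, sub_mul,
    Finset.sum_sub_distrib, Pi.single_apply, mul_ite, mul_one, mul_zero, ite_mul, zero_mul,
    Finset.sum_ite_eq', Finset.mem_univ, if_true] at hdet
  exact sub_eq_zero.mp hdet

theorem det_submatrix_succAbove_mul_det_submatrix_succAbove_eq
    {M M' : Matrix (Fin m) (Fin (m + 1)) R}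
    (hM : ∀ s, ∑ t, M s t = 0) (hM' : ∀ s, ∑ t, M' s t = 0) (c c' : Fin (m + 1)) :
    (M.submatrix id c.succAbove).det * (M'.submatrix id c.succAbove).det =
      (M.submatrix id c'.succAbove).det * (M'.submatrix id c'.succAbove).det := by
  have h := neg_one_pow_mul_det_submatrix_succAbove_eq hM c c'
  have h' := neg_one_pow_mul_det_submatrix_succAbove_eq hM' c c'
  have hsq : ∀ n : ℕ, ((-1 : R) ^ n) ^ 2 = 1 := fun n => by
    rw [← pow_mul, mul_comm, pow_mul, neg_one_sq, one_pow]
  linear_combination (-1) ^ (c : ℕ) * (M'.submatrix id c.succAbove).det * h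
    + (-1) ^ (c' : ℕ) * (M.submatrix id c'.succAbove).det * h'
    - (M.submatrix id c.succAbove).det * (M'.submatrix id c.succAbove).det * hsq c
    + (M.submatrix id c'.succAbove).det * (M'.submatrix id c'.succAbove).det * hsq c'

end DeleteColumn

theorem quadMatrix_row_sum {m : ℕ} {R : Type*} [CommRing R] {i j : Fin m → Fin (m + 1)}
    (hij : ∀ s, i s ≠ j s) (s : Fin m) : ∑ t, quadMatrix (R := R) i j s t = 0 := by
  have hsplit : ∀ t, quadMatrix (R := R) i j s t
      = (if t = i s then 1 else 0) + (if t = j s then -1 else 0) := by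
    intro t
    unfold quadMatrix
    have := hij s
    split_ifs <;> simp_all [eq_comm]
  simp [hsplit, Finset.sum_add_distrib]

theorem shuffleMatrix_submatrix {m : ℕ} {n R : Type*} (A B : Matrix (Fin m) n R)
    (e : Fin m → n) (I : Finset (Fin m)) :
    shuffleMatrix (A.submatrix id e) (B.submatrix id e) I =
      (of fun s => if s ∈ I then A s else B s).submatrix id e := by
  ext s t
  by_cases hs : s ∈ I <;> simp [shuffleMatrix, hs]

/-- Given `n − 1` quadruples `(i_s, j_s, k_s, l_s)` (with `i_s ≠ j_s`, `k_s ≠ l_s`), form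
the `(n−1) × n` matrices `A_𝔈`, `B_𝔈` and delete a column `c` to get square matrices
`A_c`, `B_c`.  Then `sdet(A_c, B_c)` does not depend on the deleted column `c`. -/
theorem sdet_deleted_column_independent {m : ℕ} {R : Type*} [CommRing R]
    (i j k l : Fin m → Fin (m + 1))
    (hij : ∀ s, i s ≠ j s) (hkl : ∀ s, k s ≠ l s) (c c' : Fin (m + 1)) :
    sdet ((quadMatrix i j (R := R)).submatrix id c.succAbove)
        ((quadMatrix k l (R := R)).submatrix id c.succAbove) =
      sdet ((quadMatrix i j (R := R)).submatrix id c'.succAbove)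
        ((quadMatrix k l (R := R)).submatrix id c'.succAbove) := by
  let N (I : Finset (Fin m)) : Matrix (Fin m) (Fin (m + 1)) R :=
    of fun s => if s ∈ I then quadMatrix i j s else quadMatrix k l s
  have hrow : ∀ I s, ∑ t, N I s t = 0 := by
    intro I s
    by_cases hs : s ∈ I <;> simp [N, hs, quadMatrix_row_sum hij, quadMatrix_row_sum hkl]
  unfold sdet
  refine Finset.sum_congr rfl fun I _ => ?_
  simp only [shuffleMatrix_submatrix]
  exact det_submatrix_succAbove_mul_det_submatrix_succAbove_eq (hrow I) (hrow Iᶜ) c c'
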